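/- arXiv:2506.23651 — 6 statements merged into one kernel-verified Lean document; each statement's English description precedes it below -/
import Mathlib

section
/- The free-category monad endofunctor T₁ := Cat.free ⋙ Quiv.forget on the category Quiv of quivers — sending a quiver X to the quiver with the same vertices whose arrows are the paths in X — is a parametric right adjoint: Quiv has a terminal object ⊤, and the induced functor Quiv ⥤ Over (T₁.obj ⊤), sending X to the object of the slice given by T₁ applied to the unique morphism X ⟶ ⊤, has a left adjoint. -/
open CategoryTheory CategoryTheory.Limits

universe u

/-- The carrier of the terminal quiver: one vertex and one arrow. -/
def TerminalQuiverCarrier : Type u := PUnit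

instance : Quiver.{u} TerminalQuiverCarrier.{u} := ⟨fun _ _ => PUnit⟩

/-- The terminal object of `Quiv`: one vertex and one arrow. -/
def terminalQuiv : Quiv.{u, u} := Quiv.of TerminalQuiverCarrier.{u}

instance (X : Quiv.{u, u}) : Subsingleton (X ⟶ terminalQuiv.{u}) := by
  constructor
  intro F G
  fapply Prefunctor.ext
  · intro x
    exact Subsingleton.elim (α := PUnit) _ _
  · intro x y f
    exact Subsingleton.elim (α := PUnit) _ _

instance (X : Quiv.{u, u}) : Nonempty (X ⟶ terminalQuiv.{u}) :=
  ⟨{ obj := fun _ => PUnit.unit, map := fun _ => PUnit.unit }⟩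

/-- `Quiv` has a terminal object. -/
instance : HasTerminal Quiv.{u, u} := hasTerminal_of_unique terminalQuiv.{u}

/-- The canonical comparison functor `A ⥤ Over (G.obj ⊤_A)` of a functor `G : A ⥤ B`,
sending `X` to `G.map (terminal.from X)`. -/
noncomputable def CategoryTheory.Functor.praComparison {A : Type*} [Category A] {B : Type*}
    [Category B] [HasTerminal A] (G : A ⥤ B) : A ⥤ Over (G.obj (⊤_ A)) where
  obj X := Over.mk (G.map (terminal.from X))
  map {X Y} f := Over.homMk (G.map f) (by simp [← Functor.map_comp])

/-- A functor `G : A ⥤ B` (with `A` having a terminal object) is a *parametric right adjoint*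
if the induced functor `A ⥤ Over (G.obj ⊤_A)` has a left adjoint. -/
def CategoryTheory.Functor.IsParametricRightAdjoint {A : Type*} [Category A] {B : Type*}
    [Category B] [HasTerminal A] (G : A ⥤ B) : Prop :=
  G.praComparison.IsRightAdjoint

/-!
A morphism `Y ⟶ T ⊤` assigns a natural number to every arrow of `Y`, since a path in the
terminal quiver is determined by its length. The left adjoint sends such a length-labelled quiver
to its subdivision, in which an arrow of length `n` becomes a chain of `n` new arrows (and an
arrow of length `0` glues its endpoints). As a path is determined by its vertices and arrows,
prefunctors from the subdivision to `X` correspond to the length-preserving prefunctors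
`Y ⟶ T X`, which are exactly the morphisms over `T ⊤`.
-/

open Quiver

namespace Quiver.Path

variable {V : Type*} [Quiver V]

/-- The `i`-th vertex of `p`; it is the endpoint of `p` for every `i ≥ p.length`. -/
def vertex {a : V} : ∀ {b : V}, Path a b → ℕ → V
  | _, .nil, _ => a
  | b, .cons p _, i => if i ≤ p.length then p.vertex i else b

lemma vertex_cons_of_le {a b c : V} (p : Path a b) (e : b ⟶ c) {i : ℕ} (h : i ≤ p.length) :
    (p.cons e).vertex i = p.vertex i := if_pos h

@[simp]
lemma vertex_zero {a b : V} (p : Path a b) : p.vertex 0 = a := by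
  induction p with
  | nil => rfl
  | cons p e ih => rw [vertex_cons_of_le p e (Nat.zero_le _), ih]

lemma vertex_of_length_le {a b : V} (p : Path a b) {i : ℕ} (h : p.length ≤ i) :
    p.vertex i = b := by
  cases p with
  | nil => rfl
  | cons p e => exact if_neg (by rw [length_cons] at h; omega)

def edge {a : V} : ∀ {b : V} (p : Path a b) (i : ℕ), i < p.length →
    (p.vertex i ⟶ p.vertex (i + 1))
  | _, .nil, _, h => absurd h (Nat.not_lt_zero _)
  | _, .cons p e, i, h =>
    if hi : i < p.length then
      (p.edge i hi).cast (if_pos hi.le).symm (if_pos hi).symm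
    else
      have hi : i = p.length := by rw [length_cons] at h; omega
      e.cast (by rw [vertex_cons_of_le p e hi.le, vertex_of_length_le p hi.ge])
        (vertex_of_length_le _ (by rw [length_cons]; omega)).symm

lemma edge_cons_of_lt {a b c : V} (p : Path a b) (e : b ⟶ c) {i : ℕ} (hi : i < p.length)
    (h : i < (p.cons e).length) : (p.cons e).edge i h ≍ p.edge i hi := by
  rw [edge, dif_pos hi]
  exact Hom.cast_heq _ _ _

lemma edge_cons_length {a b c : V} (p : Path a b) (e : b ⟶ c)
    (h : p.length < (p.cons e).length) : (p.cons e).edge p.length h ≍ e := by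
  rw [edge, dif_neg (lt_irrefl _)]
  exact Hom.cast_heq _ _ _

theorem ext_vertex_edge {a : V} : ∀ {b : V} {p q : Path a b}, p.length = q.length →
    (∀ i, p.vertex i = q.vertex i) → (∀ i h h', p.edge i h ≍ q.edge i h') → p = q
  | _, .nil, .nil, _, _, _ => rfl
  | _, .nil, .cons _ _, hl, _, _ | _, .cons _ _, .nil, hl, _, _ => by simp at hl
  | _, .cons p e, .cons q f, hl, hv, he => by
    have hl' : p.length = q.length := by simpa using hl
    obtain rfl : _ = _ := by
      simpa [vertex_cons_of_le _ _ le_rfl, vertex_cons_of_le _ _ hl'.le,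
        vertex_of_length_le p le_rfl, vertex_of_length_le q hl'.ge] using hv p.length
    obtain rfl : p = q := by
      refine ext_vertex_edge hl' (fun i => ?_) (fun i h h' => ?_)
      · rcases le_or_gt i p.length with hi | hi
        · simpa [vertex_cons_of_le _ _ hi, vertex_cons_of_le _ _ (hl' ▸ hi)] using hv i
        · rw [vertex_of_length_le p hi.le, vertex_of_length_le q (hl' ▸ hi.le)]
      · exact (edge_cons_of_lt p e h (by simp; omega)).symm.trans
          ((he i _ _).trans (edge_cons_of_lt q f h' (by simp; omega)))
    obtain rfl : e = f := eq_of_heq <| (edge_cons_length p e (by simp)).symm.trans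
      ((he _ _ (by simp)).trans (edge_cons_length p f _))
    rfl

section Cast

variable {a b a' b' : V} (ha : a = a') (hb : b = b') (p : Path a b)

@[simp]
lemma length_cast : (p.cast ha hb).length = p.length := by subst ha hb; rfl

@[simp]
lemma vertex_cast (i : ℕ) : (p.cast ha hb).vertex i = p.vertex i := by subst ha hb; rfl

lemma edge_cast (i : ℕ) (h : i < (p.cast ha hb).length) (h' : i < p.length) :
    (p.cast ha hb).edge i h ≍ p.edge i h' := by subst ha hb; rfl

end Cast

lemma edge_heq_of_heq {a b a' b' : V} {p : Path a b} {q : Path a' b'} (ha : a = a') (hb : b = b')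
    (hpq : p ≍ q) (i : ℕ) (h : i < p.length) (h' : i < q.length) :
    p.edge i h ≍ q.edge i h' := by
  subst ha hb
  obtain rfl := eq_of_heq hpq
  rfl

lemma edge_heq_of_eq {a b : V} (p : Path a b) {i j : ℕ} (hij : i = j) (h : i < p.length)
    (h' : j < p.length) : p.edge i h ≍ p.edge j h' := by
  subst hij
  rfl

def ofSeq (f : ℕ → V) : ∀ n : ℕ, (∀ i < n, f i ⟶ f (i + 1)) → Path (f 0) (f n)
  | 0, _ => .nil
  | n + 1, g => (ofSeq f n fun i hi => g i (by omega)).cons (g n (by omega))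

section OfSeq

variable (f : ℕ → V)

@[simp]
lemma length_ofSeq : ∀ (n : ℕ) (g : ∀ i < n, f i ⟶ f (i + 1)), (ofSeq f n g).length = n
  | 0, _ => rfl
  | n + 1, _ => congrArg (· + 1) (length_ofSeq n _)

lemma vertex_ofSeq : ∀ (n : ℕ) (g : ∀ i < n, f i ⟶ f (i + 1)) {i : ℕ}, i ≤ n →
    (ofSeq f n g).vertex i = f i
  | 0, _, i, hi => by rw [Nat.le_zero.mp hi]; rfl
  | n + 1, g, i, hi => by
    rcases Nat.lt_or_ge i (n + 1) with hlt | hge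
    · rw [ofSeq, vertex_cons_of_le _ _ (by simp; omega), vertex_ofSeq n _ (by omega)]
    · obtain rfl : i = n + 1 := by omega
      exact vertex_of_length_le _ (by simp)

lemma edge_ofSeq : ∀ (n : ℕ) (g : ∀ i < n, f i ⟶ f (i + 1)) (i : ℕ)
    (h : i < (ofSeq f n g).length) (hi : i < n), (ofSeq f n g).edge i h ≍ g i hi
  | 0, _, _, _, hi => absurd hi (Nat.not_lt_zero _)
  | n + 1, g, i, h, hi => by
    rcases Nat.lt_or_ge i n with hlt | hge
    · exact (edge_cons_of_lt _ _ (by simpa using hlt) h).trans (edge_ofSeq n _ i _ hlt)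
    · obtain rfl : i = n := by omega
      exact (edge_heq_of_eq _ (length_ofSeq f i _).symm h (by simp)).trans
        (edge_cons_length _ _ _)

end OfSeq

theorem eq_of_length_eq [Subsingleton V] [∀ a b : V, Subsingleton (a ⟶ b)] {a : V} :
    ∀ {b : V} {p q : Path a b}, p.length = q.length → p = q
  | _, .nil, .nil, _ => rfl
  | _, .nil, .cons _ _, hl | _, .cons _ _, .nil, hl => by simp at hl
  | _, .cons (b := c) p e, .cons (b := c') q f, hl => by
    obtain rfl := Subsingleton.elim c c'
    rw [eq_of_length_eq (p := p) (q := q) (by simpa using hl), Subsingleton.elim e f]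

theorem heq_of_length_eq [Subsingleton V] [∀ a b : V, Subsingleton (a ⟶ b)] {a b a' b' : V}
    {p : Path a b} {q : Path a' b'} (hl : p.length = q.length) : p ≍ q := by
  obtain rfl := Subsingleton.elim a a'
  obtain rfl := Subsingleton.elim b b'
  exact heq_of_eq (eq_of_length_eq hl)

end Quiver.Path

namespace Prefunctor

variable {V W : Type*} [Quiver V] [Quiver W]

theorem hext {F G : V ⥤q W} (h_obj : ∀ x, F.obj x = G.obj x)
    (h_map : ∀ {x y : V} (f : x ⟶ y), F.map f ≍ G.map f) : F = G := by
  obtain ⟨Fobj, Fmap⟩ := F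
  obtain ⟨Gobj, Gmap⟩ := G
  obtain rfl : Fobj = Gobj := funext h_obj
  congr
  funext x y f
  exact eq_of_heq (h_map f)

lemma congr_map_heq (F : V ⥤q W) {x y x' y' : V} (hx : x = x') (hy : y = y') {f : x ⟶ y}
    {f' : x' ⟶ y'} (h : f ≍ f') : F.map f ≍ F.map f' := by
  subst hx hy
  rw [eq_of_heq h]

@[simp]
lemma length_mapPath (F : V ⥤q W) {a b : V} (p : Path a b) :
    (F.mapPath p).length = p.length := by
  induction p with
  | nil => rfl
  | cons p e ih => simp [mapPath_cons, ih]

lemma vertex_mapPath (F : V ⥤q W) {a b : V} (p : Path a b) (i : ℕ) :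
    (F.mapPath p).vertex i = F.obj (p.vertex i) := by
  induction p with
  | nil => rfl
  | cons p e ih =>
    rw [mapPath_cons]
    by_cases h : i ≤ p.length
    · rw [Path.vertex_cons_of_le _ _ (by simpa using h), Path.vertex_cons_of_le _ _ h, ih]
    · rw [Path.vertex_of_length_le _ (by simp; omega),
        Path.vertex_of_length_le _ (by simp; omega)]

lemma edge_mapPath (F : V ⥤q W) {a b : V} (p : Path a b) (i : ℕ)
    (h : i < (F.mapPath p).length) (h' : i < p.length) :
    (F.mapPath p).edge i h ≍ F.map (p.edge i h') := by
  induction p with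
  | nil => exact absurd h' (Nat.not_lt_zero _)
  | cons p e ih =>
    simp only [mapPath_cons] at h ⊢
    rcases Nat.lt_or_ge i p.length with hlt | hge
    · exact (Path.edge_cons_of_lt _ _ (by simpa using hlt) h).trans ((ih _ hlt).trans
        (F.congr_map_heq (Path.vertex_cons_of_le p e hlt.le).symm
          (Path.vertex_cons_of_le p e hlt).symm (Path.edge_cons_of_lt p e hlt h').symm))
    · obtain rfl : i = p.length := by simp at h'; omega
      refine (Path.edge_heq_of_eq _ (F.length_mapPath p).symm h (by simp)).trans
        ((Path.edge_cons_length _ _ _).trans ?_)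
      exact F.congr_map_heq
        (by rw [Path.vertex_cons_of_le p e le_rfl, Path.vertex_of_length_le p le_rfl])
        (Path.vertex_of_length_le _ (by simp)).symm (Path.edge_cons_length p e h').symm

theorem eq_of_length_map_eq [Subsingleton W] [∀ x y : W, Subsingleton (x ⟶ y)]
    {F G : V ⥤q Paths W}
    (h : ∀ {a b : V} (e : a ⟶ b), Path.length (F.map e) = Path.length (G.map e)) : F = G :=
  hext (fun _ => Subsingleton.elim (α := W) _ _) fun e => Path.heq_of_length_eq (h e)

end Prefunctor

universe v

namespace Quiver

inductive Subdivision.Point (V : Type u) [Quiver.{v} V] : Type max u v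
  | vertex (a : V)
  | onArrow {a b : V} (e : a ⟶ b) (i : ℕ)

variable {V : Type u} [Quiver.{v} V] (len : ∀ {a b : V}, (a ⟶ b) → ℕ)

/-- `.onArrow e i` is glued to the source of `e` for `i = 0` and to its target for every
`i ≥ len e`, so that an arrow of length `0` identifies its endpoints. -/
inductive Subdivision.Rel : Subdivision.Point V → Subdivision.Point V → Prop
  | source {a b : V} (e : a ⟶ b) : Rel (.onArrow e 0) (.vertex a)
  | target {a b : V} (e : a ⟶ b) {i : ℕ} (h : len e ≤ i) : Rel (.onArrow e i) (.vertex b)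

def Subdivision : Type max u v := Quot (Subdivision.Rel len)

namespace Subdivision

def vertex (a : V) : Subdivision len := Quot.mk _ (.vertex a)

def point {a b : V} (e : a ⟶ b) (i : ℕ) : Subdivision len := Quot.mk _ (.onArrow e i)

inductive Hom : Subdivision len → Subdivision len → Type max u v
  | piece {a b : V} (e : a ⟶ b) (i : ℕ) (h : i < len e) :
      Hom (point len e i) (point len e (i + 1))

instance : Quiver.{max u v} (Subdivision len) := ⟨Hom len⟩

variable {len}

lemma point_zero {a b : V} (e : a ⟶ b) : point len e 0 = vertex len a := Quot.sound (.source e)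

lemma point_of_le {a b : V} (e : a ⟶ b) {i : ℕ} (h : len e ≤ i) :
    point len e i = vertex len b :=
  Quot.sound (.target e h)

variable (len) in
def arrowPath {a b : V} (e : a ⟶ b) : Path (vertex len a) (vertex len b) :=
  (Path.ofSeq (point len e) (len e) (Hom.piece e)).cast (point_zero e) (point_of_le e le_rfl)

@[simp]
lemma length_arrowPath {a b : V} (e : a ⟶ b) : (arrowPath len e).length = len e := by
  simp [arrowPath]

lemma vertex_arrowPath {a b : V} (e : a ⟶ b) (i : ℕ) :
    Path.vertex (arrowPath len e) i = point len e i := by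
  rcases le_or_gt i (len e) with hi | hi
  · simp only [arrowPath, Path.vertex_cast]
    exact Path.vertex_ofSeq _ _ _ hi
  · exact (Path.vertex_of_length_le (arrowPath len e) ((length_arrowPath e).trans_le hi.le)).trans
      (point_of_le e hi.le).symm

lemma edge_arrowPath {a b : V} (e : a ⟶ b) (i : ℕ) (h : i < Path.length (arrowPath len e))
    (hi : i < len e) : Path.edge (arrowPath len e) i h ≍ Hom.piece e i hi :=
  (Path.edge_cast _ _ _ i h (by simpa using hi)).trans (Path.edge_ofSeq _ _ _ i _ hi)

variable (len) in
def toPaths : V ⥤q Paths (Subdivision len) where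
  obj := vertex len
  map := arrowPath len

variable {W : Type*} [Quiver W] (F : V ⥤q Paths W)
  (hF : ∀ {a b : V} (e : a ⟶ b), Path.length (F.map e) = len e)

def lift : Subdivision len ⥤q W where
  obj := Quot.lift (fun
      | .vertex a => F.obj a
      | .onArrow e i => Path.vertex (F.map e) i) (by
    rintro _ _ (⟨e⟩ | ⟨e, h⟩)
    · exact Path.vertex_zero _
    · exact Path.vertex_of_length_le _ (by rw [hF]; exact h))
  map
    | .piece e i h => Path.edge (F.map e) i (by rw [hF]; exact h)

theorem toPaths_comp_freeMap_lift :
    toPaths len ⋙q (Cat.freeMap (lift F hF)).toPrefunctor = F := by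
  refine Prefunctor.hext (fun _ => rfl) fun {a b} e => heq_of_eq ?_
  change (lift F hF).mapPath (arrowPath len e) = F.map e
  refine Path.ext_vertex_edge ?_ (fun i => ?_) (fun i h h' => ?_)
  · exact ((lift F hF).length_mapPath _).trans ((length_arrowPath e).trans (hF e).symm)
  · rw [Prefunctor.vertex_mapPath, vertex_arrowPath]
    rfl
  · have hi : i < len e := hF e ▸ h'
    exact ((lift F hF).edge_mapPath _ i h (by rwa [length_arrowPath])).trans
      ((lift F hF).congr_map_heq (vertex_arrowPath e i) (vertex_arrowPath e (i + 1))
        (edge_arrowPath e i _ hi))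

theorem hom_ext {G₁ G₂ : Subdivision len ⥤q W}
    (h : toPaths len ⋙q (Cat.freeMap G₁).toPrefunctor =
      toPaths len ⋙q (Cat.freeMap G₂).toPrefunctor) : G₁ = G₂ := by
  have h_path {a b : V} (e : a ⟶ b) :
      G₁.mapPath (arrowPath len e) ≍ G₂.mapPath (arrowPath len e) := by
    change (toPaths len ⋙q (Cat.freeMap G₁).toPrefunctor).map e ≍
      (toPaths len ⋙q (Cat.freeMap G₂).toPrefunctor).map e
    rw [h]
  have h_point {a b : V} (e : a ⟶ b) (i : ℕ) :
      G₁.obj (point len e i) = G₂.obj (point len e i) := by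
    have := congrArg (fun P : V ⥤q Paths W => Path.vertex (P.map e) i) h
    change (G₁.mapPath (arrowPath len e)).vertex i =
      (G₂.mapPath (arrowPath len e)).vertex i at this
    simpa [Prefunctor.vertex_mapPath, vertex_arrowPath] using this
  refine Prefunctor.hext (Quot.ind fun
    | .vertex a => Prefunctor.congr_obj h a
    | .onArrow e i => h_point e i) ?_
  rintro _ _ ⟨e, i, hi⟩
  have hlen {G : Subdivision len ⥤q W} : i < Path.length (G.mapPath (arrowPath len e)) := by
    rwa [Prefunctor.length_mapPath, length_arrowPath]
  have h_edge (G : Subdivision len ⥤q W) :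
      (G.mapPath (arrowPath len e)).edge i hlen ≍ G.map (Hom.piece e i hi) :=
    (G.edge_mapPath _ i hlen (by rwa [length_arrowPath])).trans
      (G.congr_map_heq (vertex_arrowPath e i) (vertex_arrowPath e (i + 1))
        (edge_arrowPath e i _ hi))
  exact (h_edge G₁).symm.trans ((Path.edge_heq_of_heq (V := W) (Prefunctor.congr_obj h _)
    (Prefunctor.congr_obj h _) (h_path e) i hlen hlen).trans (h_edge G₂))

end Subdivision
end Quiver

theorem CategoryTheory.Functor.isRightAdjoint_of_existsUnique {C D : Type*} [Category C]
    [Category D] (R : D ⥤ C) (L : C → D) (η : ∀ A, A ⟶ R.obj (L A))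
    (h : ∀ A X (f : A ⟶ R.obj X), ∃! g : L A ⟶ X, η A ≫ R.map g = f) :
    R.IsRightAdjoint := by
  have (A : C) : HasInitial (StructuredArrow A R) := by
    choose g hg huniq using h A
    exact IsInitial.hasInitial (X := StructuredArrow.mk (η A)) <|
      IsInitial.ofUniqueHom (fun B => StructuredArrow.homMk (g B.right B.hom) (hg _ _))
        fun B φ => StructuredArrow.ext _ _ (huniq _ _ _ (StructuredArrow.w φ))
  exact isRightAdjointOfStructuredArrowInitials R

noncomputable def terminalQuivIsTerminal : IsTerminal terminalQuiv.{u} :=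
  IsTerminal.ofUniqueHom (fun _ => Classical.arbitrary _) fun _ _ => Subsingleton.elim _ _

instance : Subsingleton (⊤_ Quiv.{u, u}) :=
  haveI : Subsingleton terminalQuiv.{u} := inferInstanceAs (Subsingleton PUnit)
  (Quiv.equivOfIso (terminalIsoIsTerminal terminalQuivIsTerminal)).subsingleton

instance (x y : ⊤_ Quiv.{u, u}) : Subsingleton (x ⟶ y) :=
  haveI (x y : terminalQuiv.{u}) : Subsingleton (x ⟶ y) := inferInstanceAs (Subsingleton PUnit)
  (Quiv.homEquivOfIso (terminalIsoIsTerminal terminalQuivIsTerminal)).subsingleton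

/-- The free-category monad endofunctor `T₁ = Cat.free ⋙ Quiv.forget` on `Quiv`
is a parametric right adjoint. -/
theorem freeCategoryMonad_isParametricRightAdjoint :
    (Cat.free ⋙ Quiv.forget : Quiv.{u, u} ⥤ Quiv.{u, u}).IsParametricRightAdjoint := by
  let len (A : Over ((Cat.free ⋙ Quiv.forget).obj (⊤_ Quiv.{u, u}))) {a b : A.left}
      (e : a ⟶ b) : ℕ := Path.length (A.hom.map e)
  have toPaths_over A : Subdivision.toPaths (len A) ≫
      (Cat.free ⋙ Quiv.forget).map (terminal.from (Quiv.of (Subdivision (len A)))) = A.hom :=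
    Prefunctor.eq_of_length_map_eq (W := ⊤_ Quiv.{u, u}) fun e =>
      (Prefunctor.length_mapPath _ _).trans (Subdivision.length_arrowPath e)
  refine Functor.isRightAdjoint_of_existsUnique _ (fun A => Quiv.of (Subdivision (len A)))
    (fun A => Over.homMk _ (toPaths_over A)) fun A X f => ?_
  let F : A.left ⥤q Paths X := f.left
  have hF {a b : A.left} (e : a ⟶ b) : Path.length (F.map e) = len A e :=
    ((terminal.from X).length_mapPath (F.map e)).symm.trans
      (congrArg (fun P : A.left ⥤q Paths (⊤_ Quiv.{u, u}) => Path.length (P.map e)) (Over.w f))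
  refine ⟨Subdivision.lift F hF,
    Over.OverMorphism.ext (Subdivision.toPaths_comp_freeMap_lift F hF), fun g hg => ?_⟩
  exact Subdivision.hom_ext ((congrArg CommaMorphism.left hg).trans
    (Subdivision.toPaths_comp_freeMap_lift F hF).symm)
end

section
/- Let A and B be categories, where A has a terminal object, and let G : A ⥤ B be a parametric right adjoint. Then G preserves limits of every connected shape: for every nonempty connected category J, G preserves limits of shape J. -/
open CategoryTheory CategoryTheory.Limits

/-! `G` factors as the right adjoint `G.praComparison` followed by the forgetful functor
`Over (G.obj ⊤_A) ⥤ B`, which preserves (indeed creates) limits of connected shape. -/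

namespace CategoryTheory.Functor

variable {A : Type*} [Category A] {B : Type*} [Category B] [HasTerminal A]

noncomputable def praComparisonCompForgetIso (G : A ⥤ B) :
    G.praComparison ⋙ Over.forget _ ≅ G :=
  NatIso.ofComponents (fun _ => Iso.refl _) (by simp [praComparison])

end CategoryTheory.Functor

/-- A parametric right adjoint preserves limits of every (nonempty) connected shape. -/
theorem preservesLimitsOfShape_of_isParametricRightAdjoint {A : Type*} [Category A]
    {B : Type*} [Category B] [HasTerminal A] (G : A ⥤ B)
    (hG : G.IsParametricRightAdjoint) (J : Type*) [Category J] [IsConnected J] :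
    PreservesLimitsOfShape J G := by
  have : G.praComparison.IsRightAdjoint := hG
  exact preservesLimitsOfShape_of_natIso G.praComparisonCompForgetIso
end

section
/- Let C be a small category. A functor G : (C ⥤ Type) ⥤ Type is a parametric right adjoint if and only if it is a coproduct of corepresentable functors: there exist a type I and a family of objects P : I → (C ⥤ Type) such that G is isomorphic to the coproduct, indexed by I, of the functors Hom(P i, −) : (C ⥤ Type) ⥤ Type (equivalently, G is isomorphic to the functor X ↦ Σ (i : I), (P i ⟶ X)). -/
/-! Write `Ĝ` for `G.praComparison` and `T = G ⊤`. Every object `B` of `Over T` is the coproduct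
of the points `B.hom s`, and a map from the point `x` to `Ĝ X` is an element of `G X` lying over
`x`. So `Ĝ` has a left adjoint as soon as each fibre functor `X ↦ (point x ⟶ Ĝ X)` is
corepresentable, and conversely a left adjoint `L` corepresents it by `L (point x)`.
A corepresentation `P x` of each fibre then gives `G X = Σ x, (point x ⟶ Ĝ X) ≅ Σ x, (P x ⟶ X)`,
while the fibre of `X ↦ Σ i, (P i ⟶ X)` over `⟨i, !⟩` is `P i ⟶ X`. -/

open CategoryTheory CategoryTheory.Limits

/-- The coproduct, indexed by `i : I`, of the corepresentable functors `Hom(P i, −)`;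
explicitly it sends `X` to `Σ (i : I), (P i ⟶ X)`. -/
def coproductOfCorepresentables {C : Type} [SmallCategory C] {I : Type}
    (P : I → (C ⥤ Type)) : (C ⥤ Type) ⥤ Type where
  obj X := Σ i : I, (P i ⟶ X)
  map f := TypeCat.ofHom (fun p => ⟨p.1, p.2 ≫ f⟩)
  map_id X := by ext ⟨i, g⟩ : 3; simp
  map_comp f g := by ext ⟨i, h⟩ : 3; simp

universe v u

open Opposite

namespace CategoryTheory

variable {A : Type u} [Category.{v} A]

def Functor.sigmaCoyoneda {I : Type v} (P : I → A) : A ⥤ Type v where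
  obj X := Σ i : I, (P i ⟶ X)
  map f := TypeCat.ofHom fun p => ⟨p.1, p.2 ≫ f⟩

namespace Over

variable {T : Type v}

abbrev point (x : T) : Over T := Over.mk (TypeCat.ofHom fun _ : PUnit.{v + 1} => x)

def pointHomEquiv (x : T) (B : Over T) : (point x ⟶ B) ≃ {y : B.left // B.hom y = x} where
  toFun u := ⟨u.left PUnit.unit, ConcreteCategory.congr_hom (Over.w u) PUnit.unit⟩
  invFun y := Over.homMk (TypeCat.ofHom fun _ => y.1) (by ext; exact y.2)
  left_inv u := by ext ⟨⟩; rfl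
  right_inv y := rfl

def sigmaPointHomEquiv (B : Over T) : (Σ x, (point x ⟶ B)) ≃ B.left :=
  (Equiv.sigmaCongrRight fun x => pointHomEquiv x B).trans (Equiv.sigmaFiberEquiv B.hom)

def isColimitCofanPoint (B : Over T) :
    IsColimit (Cofan.mk B fun s : B.left => (pointHomEquiv (B.hom s) B).symm ⟨s, rfl⟩) :=
  Cofan.IsColimit.mk _
    (fun c => Over.homMk (TypeCat.ofHom fun s => (c.inj s).left PUnit.unit) (by
      ext s; exact ConcreteCategory.congr_hom (Over.w (c.inj s)) PUnit.unit))
    (fun c s => by ext ⟨⟩; rfl)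
    (fun c m hm => by
      ext s
      exact ConcreteCategory.congr_hom (congrArg CommaMorphism.left (hm s)) PUnit.unit)

end Over

namespace Functor

variable [HasTerminal A]

lemma IsParametricRightAdjoint.of_iso {B : Type*} [Category B] {G G' : A ⥤ B} (e : G ≅ G')
    (h : G'.IsParametricRightAdjoint) : G.IsParametricRightAdjoint := by
  have : G'.praComparison.IsRightAdjoint := h
  let iso : G'.praComparison ⋙ Over.map (e.inv.app (⊤_ A)) ≅ G.praComparison :=
    NatIso.ofComponents (fun X => Over.isoMk (e.app X).symm (by simp [praComparison]))
      (fun f => by ext; exact e.inv.naturality f)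
  exact isRightAdjoint_of_iso iso

variable {G : A ⥤ Type v}

lemma IsParametricRightAdjoint.isCorepresentable (h : G.IsParametricRightAdjoint)
    (x : G.obj (⊤_ A)) :
    (G.praComparison ⋙ coyoneda.obj (op (Over.point x))).IsCorepresentable :=
  have : G.praComparison.IsRightAdjoint := h
  leftAdjointObjIsDefined_of_adjunction (Adjunction.ofIsRightAdjoint _) _

lemma isParametricRightAdjoint_of_isCorepresentable [HasCoproducts.{v} A]
    (h : ∀ x : G.obj (⊤_ A),
      (G.praComparison ⋙ coyoneda.obj (op (Over.point x))).IsCorepresentable) :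
    G.IsParametricRightAdjoint := by
  refine isRightAdjoint_of_leftAdjointObjIsDefined_eq_top ?_
  ext B
  simp only [Pi.top_apply, Prop.top_eq_true, iff_true]
  exact leftAdjointObjIsDefined_of_isColimit (Over.isColimitCofanPoint B) fun s => h _

noncomputable def sigmaCoyonedaIsoOfCorepresentableBy {P : G.obj (⊤_ A) → A}
    (hP : ∀ x, (G.praComparison ⋙ coyoneda.obj (op (Over.point x))).CorepresentableBy (P x)) :
    sigmaCoyoneda P ≅ G :=
  NatIso.ofComponents
    (fun X => ((Equiv.sigmaCongrRight fun x => (hP x).homEquiv).trans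
      (Over.sigmaPointHomEquiv (G.praComparison.obj X))).toIso)
    (fun f => by
      ext ⟨x, g⟩
      exact congrArg (fun u => u.left PUnit.unit) ((hP x).homEquiv_comp f g))

lemma IsParametricRightAdjoint.exists_iso_sigmaCoyoneda (h : G.IsParametricRightAdjoint) :
    ∃ (I : Type v) (P : I → A), Nonempty (G ≅ sigmaCoyoneda P) :=
  have := h.isCorepresentable
  ⟨_, _, ⟨(sigmaCoyonedaIsoOfCorepresentableBy fun _ => corepresentableBy _).symm⟩⟩

section

variable {I : Type v} (P : I → A)

lemma sigmaCoyoneda_map_terminalFrom_eq_iff {X : A} (p : (sigmaCoyoneda P).obj X)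
    (x : (sigmaCoyoneda P).obj (⊤_ A)) :
    (sigmaCoyoneda P).map (terminal.from X) p = x ↔ p.1 = x.1 := by
  refine ⟨congrArg Sigma.fst, fun h => ?_⟩
  obtain ⟨i, f⟩ := p
  obtain ⟨j, g⟩ := x
  obtain rfl : i = j := h
  exact congrArg (Sigma.mk i) (terminal.hom_ext _ _)

noncomputable def sigmaCoyonedaPraComparisonCorepresentableBy
    (x : (sigmaCoyoneda P).obj (⊤_ A)) :
    ((sigmaCoyoneda P).praComparison ⋙ coyoneda.obj (op (Over.point x))).CorepresentableBy
      (P x.1) where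
  homEquiv {X} := ((Equiv.sigmaSubtype x.1).symm.trans (Equiv.subtypeEquivRight fun p =>
    (sigmaCoyoneda_map_terminalFrom_eq_iff P (X := X) p x).symm)).trans
      (Over.pointHomEquiv x ((sigmaCoyoneda P).praComparison.obj X)).symm
  homEquiv_comp _ _ := rfl

lemma isParametricRightAdjoint_sigmaCoyoneda [HasCoproducts.{v} A] :
    (sigmaCoyoneda P).IsParametricRightAdjoint :=
  isParametricRightAdjoint_of_isCorepresentable fun x =>
    (sigmaCoyonedaPraComparisonCorepresentableBy P x).isCorepresentable

end

end Functor
end CategoryTheory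

/-- A `Type`-valued functor on a presheaf category is a parametric right adjoint if and only
if it is a coproduct of corepresentable functors. -/
theorem isParametricRightAdjoint_iff_coproduct_of_corepresentables {C : Type}
    [SmallCategory C] (G : (C ⥤ Type) ⥤ Type) :
    G.IsParametricRightAdjoint ↔
      ∃ (I : Type) (P : I → (C ⥤ Type)), Nonempty (G ≅ coproductOfCorepresentables P) := by
  -- `coproductOfCorepresentables P` unfolds to `Functor.sigmaCoyoneda P`.
  refine ⟨fun h => h.exists_iso_sigmaCoyoneda, ?_⟩
  rintro ⟨I, P, ⟨e⟩⟩
  exact (Functor.isParametricRightAdjoint_sigmaCoyoneda P).of_iso e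
end

section
/- Let A, B, E be categories such that A and B have terminal objects, and let F : A ⥤ B and G : B ⥤ E be parametric right adjoints. Then the composite F ⋙ G : A ⥤ E is a parametric right adjoint. -/
/-!
The comparison functor of `F ⋙ G` is that of `F` followed by `Over.post G`, so it suffices that
`Over.post G : Over Y ⥤ Over (G.obj Y)` is a right adjoint for every `Y`. Writing `Ĝ` for the
comparison functor of `G`, this is `Over.post Ĝ : Over Y ⥤ Over (Ĝ Y)` followed by the iterated
slice equivalence `Over (Ĝ Y) ≌ Over (G.obj Y)`, and slices of right adjoints are right adjoints.
-/

open CategoryTheory CategoryTheory.Limits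

namespace CategoryTheory.Functor

variable {A B E : Type*} [Category A] [Category B] [Category E]

theorem praComparison_comp [HasTerminal A] (F : A ⥤ B) (G : B ⥤ E) :
    (F ⋙ G).praComparison = F.praComparison ⋙ Over.post G :=
  rfl

theorem post_praComparison_comp_iteratedSliceEquiv_functor [HasTerminal B] (G : B ⥤ E) (Y : B) :
    Over.post (X := Y) G.praComparison ⋙ (Over.iteratedSliceEquiv (G.praComparison.obj Y)).functor =
      Over.post (X := Y) G :=
  rfl

theorem IsParametricRightAdjoint.isRightAdjoint_post [HasTerminal B] {G : B ⥤ E}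
    (hG : G.IsParametricRightAdjoint) (Y : B) : (Over.post (X := Y) G).IsRightAdjoint := by
  have : G.praComparison.IsRightAdjoint := hG
  -- elaborated without the expected type, so that instance search sees the codomain
  -- `Over (G.praComparison.obj Y).left` rather than the merely defeq `Over (G.obj Y)`
  exact (isRightAdjoint_of_iso (eqToIso (post_praComparison_comp_iteratedSliceEquiv_functor G Y)) :)

end CategoryTheory.Functor

/-- The composite of two parametric right adjoints is a parametric right adjoint. -/
theorem isParametricRightAdjoint_comp {A : Type*} [Category A] {B : Type*} [Category B]
    {E : Type*} [Category E] [HasTerminal A] [HasTerminal B] (F : A ⥤ B) (G : B ⥤ E)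
    (hF : F.IsParametricRightAdjoint) (hG : G.IsParametricRightAdjoint) :
    (F ⋙ G).IsParametricRightAdjoint := by
  have : F.praComparison.IsRightAdjoint := hF
  have := hG.isRightAdjoint_post (F.obj (⊤_ A))
  rw [Functor.IsParametricRightAdjoint, Functor.praComparison_comp]
  infer_instance
end

section
/- Let A and B be categories where A has a terminal object, and let G : A ⥤ B be a functor. Then G is a parametric right adjoint if and only if for every object a of A the induced functor on slice categories Over a ⥤ Over (G.obj a) — sending an object u : x ⟶ a of Over a to G.map u : G.obj x ⟶ G.obj a, with the evident action on morphisms — has a left adjoint. -/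
open CategoryTheory CategoryTheory.Limits

/-!
`G` is definitionally `G.praComparison ⋙ Over.forget _`, and on slices `Over.post (Over.forget _)`
is the iterated-slice equivalence, so `Over.post G` is, up to equivalence, `Over.post` of the
right adjoint `G.praComparison`, hence a right adjoint. Conversely `A ≌ Over (⊤_ A)`, and along this
equivalence `Over.post G` over `⊤_ A` is definitionally `G.praComparison`.
-/

namespace CategoryTheory

theorem Over.isRightAdjoint_post_forget {T : Type*} [Category T] {X : T} (f : Over X) :
    (Over.post (X := f) (Over.forget X)).IsRightAdjoint :=
  @Functor.isRightAdjoint_of_iso _ _ _ _ _ _ (Over.iteratedSliceForwardIsoPost X f).symm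
    (Over.iteratedSliceEquiv f).isRightAdjoint_functor

theorem Over.isRightAdjoint_post_comp_forget {T : Type*} [Category T] {D : Type*} [Category D]
    {Y : D} (F : T ⥤ Over Y) [F.IsRightAdjoint] (X : T) :
    (Over.post (X := X) (F ⋙ Over.forget Y)).IsRightAdjoint :=
  have := Over.isRightAdjoint_post_forget (F.obj X)
  Functor.isRightAdjoint_of_iso (Over.postComp F (Over.forget Y)).symm

namespace Functor

variable {A : Type*} [Category A] {B : Type*} [Category B] [HasTerminal A]

noncomputable def praComparisonIsoOverPost (G : A ⥤ B) :
    (Over.equivalenceOfIsTerminal terminalIsTerminal).inverse ⋙ Over.post G ≅ G.praComparison :=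
  Iso.refl _

theorem isParametricRightAdjoint_of_isRightAdjoint_over_post_terminal {G : A ⥤ B}
    [(Over.post (X := ⊤_ A) G).IsRightAdjoint] : G.IsParametricRightAdjoint :=
  isRightAdjoint_of_iso (praComparisonIsoOverPost G)

theorem IsParametricRightAdjoint.isRightAdjoint_over_post {G : A ⥤ B}
    (h : G.IsParametricRightAdjoint) (a : A) : (Over.post (X := a) G).IsRightAdjoint :=
  have : G.praComparison.IsRightAdjoint := h
  Over.isRightAdjoint_post_comp_forget G.praComparison a

end Functor

end CategoryTheory

/-- A functor `G : A ⥤ B` is a parametric right adjoint if and only if, for every object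
`a : A`, the induced functor `Over a ⥤ Over (G.obj a)` (Mathlib's `Over.post G`, sending
`u : x ⟶ a` to `G.map u : G.obj x ⟶ G.obj a`) has a left adjoint. -/
theorem isParametricRightAdjoint_iff_over_post_isRightAdjoint {A : Type*} [Category A]
    {B : Type*} [Category B] [HasTerminal A] (G : A ⥤ B) :
    G.IsParametricRightAdjoint ↔
      ∀ a : A, (Over.post (X := a) G).IsRightAdjoint :=
  ⟨fun h a => h.isRightAdjoint_over_post a,
    fun h =>
      have := h (⊤_ A)
      Functor.isParametricRightAdjoint_of_isRightAdjoint_over_post_terminal⟩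
end

section
/- The free-category monad endofunctor T₁ := Cat.free ⋙ Quiv.forget on the category Quiv of quivers preserves limits of every connected shape: for every nonempty connected category J, T₁ preserves limits of shape J. -/
/-!
Testing against the one-vertex quiver and the walking edge shows that the vertices and arrows of
a limit of quivers are exactly the compatible families of vertices and arrows of the diagram, and
conversely any cone with this property is a limit. `T₁` keeps the vertices and replaces arrows by
paths. Over a connected diagram the paths of a compatible family all have the same length, so the
family lifts edge by edge to a path of the limit; two paths with the same projections agree edge
by edge as soon as the diagram is nonempty.
-/

open CategoryTheory CategoryTheory.Limits Quiver

universe w w' v u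

@[simp]
theorem Prefunctor.length_mapPath_s10 {V W : Type*} [Quiver V] [Quiver W] (F : V ⥤q W) {a b : V}
    (p : Path a b) : (F.mapPath p).length = p.length := by
  induction p with
  | nil => rfl
  | cons p e ih => simp [ih]

theorem Prefunctor.ext_heq {V W : Type*} [Quiver V] [Quiver W] {F G : V ⥤q W}
    (h_obj : ∀ X, F.obj X = G.obj X) (h_map : ∀ (X Y : V) (f : X ⟶ Y), F.map f ≍ G.map f) :
    F = G := by
  obtain ⟨Fobj, Fmap⟩ := F
  obtain ⟨Gobj, Gmap⟩ := G
  obtain rfl : Fobj = Gobj := funext h_obj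
  congr
  funext X Y f
  exact eq_of_heq (h_map X Y f)

namespace Quiver.Path

variable {V : Type*} [Quiver V]

theorem length_eq_of_heq {a b a' b' : V} {p : Path a b} {p' : Path a' b'} (ha : a = a')
    (hb : b = b') (h : p ≍ p') : p.length = p'.length := by
  subst ha hb
  rw [eq_of_heq h]

theorem cons_heq_cons_iff {a b c a' b' c' : V} {p : Path a b} {e : b ⟶ c} {p' : Path a' b'}
    {e' : b' ⟶ c'} (ha : a = a') (hc : c = c') :
    p.cons e ≍ p'.cons e' ↔ b = b' ∧ p ≍ p' ∧ e ≍ e' := by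
  subst ha hc
  refine ⟨fun h => ?_, fun ⟨hb, hp, he⟩ => ?_⟩
  · have h := eq_of_heq h
    exact ⟨obj_eq_of_cons_eq_cons h, heq_of_cons_eq_cons h, hom_heq_of_cons_eq_cons h⟩
  · subst hb
    rw [eq_of_heq hp, eq_of_heq he]

theorem nil_heq_of_length_eq_zero {a' a b : V} (ha : a' = a) (p : Path a b) (h : p.length = 0) :
    (Path.nil : Path a' a') ≍ p := by
  subst ha
  obtain rfl := eq_of_length_zero p h
  rw [eq_nil_of_length_zero p h]

end Quiver.Path

namespace CategoryTheory.Quiv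

def WalkingVertex : Type u := PUnit

instance : Quiver.{v} WalkingVertex.{u} := ⟨fun _ _ => PEmpty⟩

def WalkingVertex.lift {V : Type*} [Quiver V] (x : V) : WalkingVertex.{u} ⥤q V where
  obj _ := x
  map e := PEmpty.elim e

inductive WalkingEdge : Type u
  | src
  | tgt

instance : Quiver.{v} WalkingEdge.{u} where
  Hom
    | .src, .tgt => PUnit
    | _, _ => PEmpty

def WalkingEdge.edge : (WalkingEdge.src : WalkingEdge.{u}) ⟶ WalkingEdge.tgt := PUnit.unit

def WalkingEdge.lift {V : Type*} [Quiver V] {x y : V} (e : x ⟶ y) : WalkingEdge.{u} ⥤q V where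
  obj
    | .src => x
    | .tgt => y
  map {a b} f := match a, b, f with
    | .src, .tgt, _ => e

theorem WalkingEdge.prefunctor_ext {V : Type*} [Quiver V] {F G : WalkingEdge.{u} ⥤q V}
    (h_src : F.obj .src = G.obj .src) (h_tgt : F.obj .tgt = G.obj .tgt)
    (h_edge : F.map WalkingEdge.edge ≍ G.map WalkingEdge.edge) : F = G := by
  refine Prefunctor.ext_heq (fun a => ?_) (fun a b g => ?_)
  · cases a
    exacts [h_src, h_tgt]
  · cases a <;> cases b
    · exact (g : PEmpty).elim
    · exact h_edge
    · exact (g : PEmpty).elim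
    · exact (g : PEmpty).elim

section Limits

variable {J : Type w} [Category.{w'} J] {K : J ⥤ Quiv.{v, u}}

theorem map_obj_π_app_obj (c : Cone K) {j j' : J} (f : j ⟶ j') (v : c.pt) :
    (K.map f).obj ((c.π.app j).obj v) = (c.π.app j').obj v :=
  Prefunctor.congr_obj (c.w f) v

theorem map_map_π_app_map (c : Cone K) {j j' : J} (f : j ⟶ j') {v w : c.pt} (a : v ⟶ w) :
    (K.map f).map ((c.π.app j).map a) ≍ (c.π.app j').map a :=
  Quiver.heq_of_homOfEq_ext _ _ (Prefunctor.congr_hom (c.w f) a)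

theorem map_obj_eq_of_π_app_obj_eq (c : Cone K) {v : c.pt} {x : ∀ j, K.obj j}
    (hv : ∀ j, (c.π.app j).obj v = x j) ⦃j j' : J⦄ (f : j ⟶ j') : (K.map f).obj (x j) = x j' := by
  rw [← hv, ← hv]
  exact map_obj_π_app_obj c f v

variable (K)

def pointCone (x : ∀ j, K.obj j) (hx : ∀ ⦃j j'⦄ (f : j ⟶ j'), (K.map f).obj (x j) = x j') :
    Cone K where
  pt := Quiv.of WalkingVertex.{u}
  π :=
    { app j := WalkingVertex.lift (x j)
      naturality _ _ f :=
        Prefunctor.ext_heq (fun _ => (hx f).symm) (fun _ _ e => PEmpty.elim e) }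

def edgeCone {x y : ∀ j, K.obj j} (e : ∀ j, x j ⟶ y j)
    (hx : ∀ ⦃j j'⦄ (f : j ⟶ j'), (K.map f).obj (x j) = x j')
    (hy : ∀ ⦃j j'⦄ (f : j ⟶ j'), (K.map f).obj (y j) = y j')
    (he : ∀ ⦃j j'⦄ (f : j ⟶ j'), (K.map f).map (e j) ≍ e j') : Cone K where
  pt := Quiv.of WalkingEdge.{u}
  π :=
    { app j := WalkingEdge.lift (e j)
      naturality _ _ f := WalkingEdge.prefunctor_ext (hx f).symm (hy f).symm (he f).symm }

variable {K}

structure IsElementwiseLimit (c : Cone K) : Prop where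
  vertex_ext {v w : c.pt} : (∀ j, (c.π.app j).obj v = (c.π.app j).obj w) → v = w
  exists_vertex (x : ∀ j, K.obj j) :
    (∀ ⦃j j'⦄ (f : j ⟶ j'), (K.map f).obj (x j) = x j') → ∃ v : c.pt, ∀ j, (c.π.app j).obj v = x j
  hom_ext {v w : c.pt} {a b : v ⟶ w} : (∀ j, (c.π.app j).map a = (c.π.app j).map b) → a = b
  exists_hom {x y : ∀ j, K.obj j} (e : ∀ j, x j ⟶ y j) :
    (∀ ⦃j j'⦄ (f : j ⟶ j'), (K.map f).map (e j) ≍ e j') → ∀ {v w : c.pt},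
      (∀ j, (c.π.app j).obj v = x j) → (∀ j, (c.π.app j).obj w = y j) →
      ∃ a : v ⟶ w, ∀ j, (c.π.app j).map a ≍ e j

variable {c : Cone K}

section IsLimit

variable (hc : IsLimit c)
include hc

theorem vertex_ext_of_isLimit {v w : c.pt} (h : ∀ j, (c.π.app j).obj v = (c.π.app j).obj w) :
    v = w :=
  Prefunctor.congr_obj (hc.hom_ext (W := Quiv.of WalkingVertex.{u})
    (f := WalkingVertex.lift v) (f' := WalkingVertex.lift w)
    fun j => Prefunctor.ext_heq (fun _ => h j) (fun _ _ e => PEmpty.elim e)) PUnit.unit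

theorem exists_vertex_of_isLimit (x : ∀ j, K.obj j)
    (hx : ∀ ⦃j j'⦄ (f : j ⟶ j'), (K.map f).obj (x j) = x j') :
    ∃ v : c.pt, ∀ j, (c.π.app j).obj v = x j :=
  ⟨(hc.lift (pointCone K x hx)).obj PUnit.unit,
    fun j => Prefunctor.congr_obj (hc.fac (pointCone K x hx) j) PUnit.unit⟩

theorem hom_ext_of_isLimit {v w : c.pt} {a b : v ⟶ w}
    (h : ∀ j, (c.π.app j).map a = (c.π.app j).map b) : a = b := by
  have hab : WalkingEdge.lift.{u} a = WalkingEdge.lift b :=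
    hc.hom_ext (W := Quiv.of WalkingEdge.{u}) fun j =>
      WalkingEdge.prefunctor_ext rfl rfl (heq_of_eq (h j))
  exact eq_of_heq (Quiver.heq_of_homOfEq_ext _ _ (Prefunctor.congr_hom hab WalkingEdge.edge))

theorem exists_hom_of_isLimit {x y : ∀ j, K.obj j} (e : ∀ j, x j ⟶ y j)
    (he : ∀ ⦃j j'⦄ (f : j ⟶ j'), (K.map f).map (e j) ≍ e j') {v w : c.pt}
    (hv : ∀ j, (c.π.app j).obj v = x j) (hw : ∀ j, (c.π.app j).obj w = y j) :
    ∃ a : v ⟶ w, ∀ j, (c.π.app j).map a ≍ e j := by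
  let C := edgeCone K e (map_obj_eq_of_π_app_obj_eq c hv) (map_obj_eq_of_π_app_obj_eq c hw) he
  let L := hc.lift C
  have hfac := hc.fac C
  have hsrc : L.obj WalkingEdge.src = v := vertex_ext_of_isLimit hc fun j =>
    (Prefunctor.congr_obj (hfac j) WalkingEdge.src).trans (hv j).symm
  have htgt : L.obj WalkingEdge.tgt = w := vertex_ext_of_isLimit hc fun j =>
    (Prefunctor.congr_obj (hfac j) WalkingEdge.tgt).trans (hw j).symm
  refine ⟨Quiver.homOfEq (L.map WalkingEdge.edge) hsrc htgt, fun j => ?_⟩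
  rw [Prefunctor.homOfEq_map]
  refine (Quiver.homOfEq_heq _ _ _).trans ?_
  exact Quiver.heq_of_homOfEq_ext _ _ (Prefunctor.congr_hom (hfac j) WalkingEdge.edge)

theorem isElementwiseLimit_of_isLimit : IsElementwiseLimit c where
  vertex_ext := vertex_ext_of_isLimit hc
  exists_vertex := exists_vertex_of_isLimit hc
  hom_ext := hom_ext_of_isLimit hc
  exists_hom := exists_hom_of_isLimit hc

end IsLimit

namespace IsElementwiseLimit

variable (h : IsElementwiseLimit c)
include h

theorem hom_heq {v w v' w' : c.pt} (hv : v = v') (hw : w = w') {a : v ⟶ w} {b : v' ⟶ w'}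
    (hab : ∀ j, (c.π.app j).map a ≍ (c.π.app j).map b) : a ≍ b := by
  subst hv hw
  exact heq_of_eq (h.hom_ext fun j => eq_of_heq (hab j))

theorem exists_lift (s : Cone K) : ∃ L : s.pt ⥤q c.pt, ∀ j, L ⋙q c.π.app j = s.π.app j := by
  choose obj h_obj using fun X => h.exists_vertex _ fun _ _ f => map_obj_π_app_obj s f X
  choose map h_map using fun X Y (α : X ⟶ Y) =>
    h.exists_hom _ (fun _ _ f => map_map_π_app_map s f α) (h_obj X) (h_obj Y)
  exact ⟨⟨obj, map _ _⟩, fun j =>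
    Prefunctor.ext_heq (fun X => h_obj X j) fun X Y α => h_map X Y α j⟩

noncomputable def isLimit : IsLimit c where
  lift s := (h.exists_lift s).choose
  fac s := (h.exists_lift s).choose_spec
  uniq s m hm := by
    have hL := (h.exists_lift s).choose_spec
    have h_obj : ∀ X, m.obj X = (h.exists_lift s).choose.obj X := fun X =>
      h.vertex_ext fun j =>
        (Prefunctor.congr_obj (hm j) X).trans (Prefunctor.congr_obj (hL j) X).symm
    refine Prefunctor.ext_heq h_obj fun X Y α => h.hom_heq (h_obj X) (h_obj Y) fun j => ?_
    exact (Quiver.heq_of_homOfEq_ext _ _ (Prefunctor.congr_hom (hm j) α)).trans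
      (Quiver.heq_of_homOfEq_ext _ _ (Prefunctor.congr_hom (hL j) α)).symm

theorem path_ext [Nonempty J] {v w : c.pt} {P Q : Path v w}
    (hPQ : ∀ j, (c.π.app j).mapPath P = (c.π.app j).mapPath Q) : P = Q := by
  induction P with
  | nil =>
    have hQ : Q.length = 0 := by
      simpa using (congrArg Path.length (hPQ (Classical.arbitrary J))).symm
    exact (Path.eq_nil_of_length_zero Q hQ).symm
  | cons P e ih =>
    cases Q with
    | nil => simpa using congrArg Path.length (hPQ (Classical.arbitrary J))
    | cons Q e' =>
      simp only [Prefunctor.mapPath_cons] at hPQ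
      obtain rfl := h.vertex_ext fun j => Path.obj_eq_of_cons_eq_cons (hPQ j)
      rw [ih fun j => eq_of_heq (Path.heq_of_cons_eq_cons (hPQ j)),
        h.hom_ext fun j => eq_of_heq (Path.hom_heq_of_cons_eq_cons (hPQ j))]

theorem exists_path [IsConnected J] {x y : ∀ j, K.obj j} (p : ∀ j, Path (x j) (y j))
    (hp : ∀ ⦃j j'⦄ (f : j ⟶ j'), (K.map f).mapPath (p j) ≍ p j') {v w : c.pt}
    (hv : ∀ j, (c.π.app j).obj v = x j) (hw : ∀ j, (c.π.app j).obj w = y j) :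
    ∃ P : Path v w, ∀ j, (c.π.app j).mapPath P ≍ p j := by
  obtain ⟨n, hn⟩ : ∃ n, ∀ j, (p j).length = n :=
    ⟨_, fun j => constant_of_preserves_morphisms (fun j => (p j).length)
      (fun j j' f => (Prefunctor.length_mapPath_s10 _ _).symm.trans <| Path.length_eq_of_heq
        (map_obj_eq_of_π_app_obj_eq c hv f) (map_obj_eq_of_π_app_obj_eq c hw f) (hp f))
      j (Classical.arbitrary J)⟩
  induction n generalizing y p w with
  | zero =>
    obtain rfl : v = w := h.vertex_ext fun j =>
      (hv j).trans ((Path.eq_of_length_zero _ (hn j)).trans (hw j).symm)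
    exact ⟨.nil, fun j => Path.nil_heq_of_length_eq_zero (hv j) (p j) (hn j)⟩
  | succ n ih =>
    choose m q e hqe using fun j =>
      (Path.length_ne_zero_iff_eq_cons (p j)).1 (by rw [hn j]; exact n.succ_ne_zero)
    have hcons : ∀ ⦃j j'⦄ (f : j ⟶ j'), (K.map f).obj (m j) = m j' ∧
        (K.map f).mapPath (q j) ≍ q j' ∧ (K.map f).map (e j) ≍ e j' := fun j j' f => by
      have hpf := hp f
      rw [hqe j, hqe j', Prefunctor.mapPath_cons] at hpf
      exact (Path.cons_heq_cons_iff (map_obj_eq_of_π_app_obj_eq c hv f)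
        (map_obj_eq_of_π_app_obj_eq c hw f)).1 hpf
    obtain ⟨u, hu⟩ := h.exists_vertex m fun j j' f => (hcons f).1
    obtain ⟨Q, hQ⟩ := ih q (fun j j' f => (hcons f).2.1) hu fun j => by
      simpa [hqe j] using hn j
    obtain ⟨a, ha⟩ := h.exists_hom e (fun j j' f => (hcons f).2.2) hu hw
    refine ⟨Q.cons a, fun j => ?_⟩
    rw [Prefunctor.mapPath_cons, hqe j]
    exact (Path.cons_heq_cons_iff (hv j) (hw j)).2 ⟨hu j, hQ j, ha j⟩

theorem mapFree [IsConnected J] : IsElementwiseLimit ((Cat.free ⋙ Quiv.forget).mapCone c) where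
  vertex_ext := h.vertex_ext
  exists_vertex := h.exists_vertex
  hom_ext := h.path_ext
  exists_hom := h.exists_path

end IsElementwiseLimit

end Limits

end CategoryTheory.Quiv

/-- The free-category monad endofunctor `T₁ = Cat.free ⋙ Quiv.forget` on `Quiv`
preserves limits of every nonempty connected shape. -/
theorem freeCategoryMonad_preservesConnectedLimits (J : Type w) [Category.{w'} J]
    [IsConnected J] :
    PreservesLimitsOfShape J (Cat.free ⋙ Quiv.forget : Quiv.{u, u} ⥤ Quiv.{u, u}) :=
  ⟨fun {_} => ⟨fun {_} hc => ⟨(Quiv.isElementwiseLimit_of_isLimit hc).mapFree.isLimit⟩⟩⟩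
end
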